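/- arXiv:2406.01510 — 2 statements merged into one kernel-verified Lean document; each statement's English description precedes it below -/
import Mathlib

section
/- The trimming operators satisfy the Thompson monoid relations: T_i ∘ T_j = T_j ∘ T_{i+1} for all i > j ≥ 1. -/
open MvPolynomial

/-- The Bergeron–Sottile map `R i` (1-based `i`): set the variable `x_i` to zero
and shift every later variable down by one.  Variables are 0-indexed: `X j`
represents `x_{j+1}`. -/
noncomputable def R (i : ℕ) : MvPolynomial ℕ ℤ →ₐ[ℤ] MvPolynomial ℕ ℤ :=
  aeval (fun j => if j + 1 < i then X j else if j + 1 = i then 0 else X (j - 1))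

/-- The trimming operator `T i = (R (i+1) f - R i f) / x_i` (1-based `i`);
the difference `R (i+1) f - R i f` is always divisible by `x_i = X (i-1)`,
so the exact quotient is computed by `divMonomial`. -/
noncomputable def T (i : ℕ) (f : MvPolynomial ℕ ℤ) : MvPolynomial ℕ ℤ :=
  (R (i + 1) f - R i f).divMonomial (Finsupp.single (i - 1) 1)

/-- `f` only involves the variables `x_1, …, x_n`. -/
def InVars (n : ℕ) (f : MvPolynomial ℕ ℤ) : Prop :=
  ∀ d ∈ f.support, ∀ j, n ≤ j → d j = 0

/-- `f` is a quasisymmetric polynomial in the variables `x_1, …, x_n`. -/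
def IsQSym (n : ℕ) (f : MvPolynomial ℕ ℤ) : Prop :=
  ∀ (k : ℕ) (a : Fin k → ℕ), (∀ l, 1 ≤ a l) →
    ∀ (i j : Fin k → ℕ), StrictMono i → StrictMono j →
      (∀ l, i l < n) → (∀ l, j l < n) →
      coeff (∑ l, Finsupp.single (i l) (a l)) f =
        coeff (∑ l, Finsupp.single (j l) (a l)) f

/-!
Setting `x_{p+1}` to zero and shifting the later variables down is `killCompl` along the
injection `ℕ → ℕ` that skips `p`, so the coefficient of `x^d` in `R_{p+1} f` is the coefficient
of `f` at `d` with a zero exponent inserted at position `p`. Hence every coefficient of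
`T_{p+1} f` is a difference of two coefficients of `f`, and both sides of the Thompson relation
expand to the same four coefficients of `f`: inserting a zero at `q` and then at `p ≤ q` is the
same as inserting at `p` and then at `q + 1`.
-/

def Nat.succAbove (p k : ℕ) : ℕ := if k < p then k else k + 1

namespace Nat

theorem succAbove_of_lt {p k : ℕ} (h : k < p) : succAbove p k = k := if_pos h

theorem succAbove_of_le {p k : ℕ} (h : p ≤ k) : succAbove p k = k + 1 := if_neg (by omega)

theorem succAbove_injective (p : ℕ) : Function.Injective (succAbove p) := by
  intro x y h
  unfold succAbove at h
  split_ifs at h <;> omega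

theorem succAbove_comp_succAbove {p q : ℕ} (h : p ≤ q) :
    succAbove p ∘ succAbove q = succAbove (q + 1) ∘ succAbove p := by
  funext k
  simp only [Function.comp, succAbove]
  split_ifs <;> omega

theorem range_succAbove (p : ℕ) : Set.range (succAbove p) = {p}ᶜ := by
  ext j
  simp only [Set.mem_range, Set.mem_compl_singleton_iff, succAbove]
  constructor
  · rintro ⟨k, rfl⟩
    split_ifs <;> omega
  · intro hj
    rcases lt_or_gt_of_ne hj with h | h
    · exact ⟨j, if_pos h⟩
    · exact ⟨j - 1, by rw [if_neg (by omega)]; omega⟩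

end Nat

open Nat (succAbove)

theorem mapDomain_succAbove_comm {p q : ℕ} (h : p ≤ q) (d : ℕ →₀ ℕ) :
    (d.mapDomain (succAbove q)).mapDomain (succAbove p) =
      (d.mapDomain (succAbove p)).mapDomain (succAbove (q + 1)) := by
  rw [← Finsupp.mapDomain_comp, ← Finsupp.mapDomain_comp, Nat.succAbove_comp_succAbove h]

theorem R_succ_eq_killCompl (p : ℕ) : _root_.R (p + 1) = killCompl (Nat.succAbove_injective p) := by
  refine algHom_ext fun j => ?_
  rw [_root_.R, killCompl, aeval_X, aeval_X]
  by_cases hj : j ∈ Set.range (succAbove p)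
  · obtain ⟨k, rfl⟩ := hj
    rw [dif_pos ⟨k, rfl⟩, Equiv.ofInjective_symm_apply]
    unfold succAbove
    split_ifs <;> first | rfl | omega
  · obtain rfl : j = p := by simpa [Nat.range_succAbove] using hj
    rw [if_neg (by omega), if_pos rfl, dif_neg hj]

theorem coeff_R_succ (p : ℕ) (f : MvPolynomial ℕ ℤ) (d : ℕ →₀ ℕ) :
    coeff d (R (p + 1) f) = coeff (d.mapDomain (succAbove p)) f := by
  rw [R_succ_eq_killCompl, coeff_killCompl]

theorem coeff_T_succ (p : ℕ) (f : MvPolynomial ℕ ℤ) (d : ℕ →₀ ℕ) :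
    coeff d (T (p + 1) f) =
      coeff ((Finsupp.single p 1 + d).mapDomain (succAbove (p + 1))) f -
        coeff ((Finsupp.single p 1 + d).mapDomain (succAbove p)) f := by
  rw [T, coeff_divMonomial, coeff_sub, coeff_R_succ, coeff_R_succ, Nat.add_sub_cancel]

theorem T_succ_comp_T_succ {a b : ℕ} (h : b < a) (f : MvPolynomial ℕ ℤ) :
    T (a + 1) (T (b + 1) f) = T (b + 1) (T (a + 2) f) := by
  ext d
  simp only [coeff_T_succ, Finsupp.mapDomain_add, Finsupp.mapDomain_single]
  simp (disch := omega) only [Nat.succAbove_of_lt, Nat.succAbove_of_le, mapDomain_succAbove_comm]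
  abel_nf

/-- Thompson monoid relations for the trimming operators:
`T_i ∘ T_j = T_j ∘ T_{i+1}` for `i > j ≥ 1`. -/
theorem trimming_thompson (i j : ℕ) (hj : 1 ≤ j) (hij : j < i)
    (f : MvPolynomial ℕ ℤ) : T i (T j f) = T j (T (i + 1) f) := by
  obtain ⟨a, rfl⟩ : ∃ a, i = a + 1 := ⟨i - 1, by omega⟩
  obtain ⟨b, rfl⟩ : ∃ b, j = b + 1 := ⟨j - 1, by omega⟩
  exact T_succ_comp_T_succ (by omega) f
end

section
/- Grouping the variables as x_{m(j-1)+r}, every m-quasisymmetric polynomial ring QSym^(m)_n is closed under multiplication; more precisely, f ∈ ℤ[x_1,...,x_n] lies in QSym^(m)_n if and only if R_1^m(f) = R_2^m(f) = ... = R_{n-m+1}^m(f), where R_i^m sets x_i = x_{i+1} = ... = x_{i+m-1} = 0 and shifts subsequent variables down by m. -/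
open MvPolynomial

/-- `f` is an `m`-quasisymmetric polynomial in `x_1, …, x_n`: for any exponents
`a_1, …, a_k ≥ 1` the coefficients of `x_{i_1}^{a_1} ⋯ x_{i_k}^{a_k}` and
`x_{j_1}^{a_1} ⋯ x_{j_k}^{a_k}` agree for strictly increasing index sequences
in `[n]` with `i_ℓ ≡ j_ℓ (mod m)` for all `ℓ`. -/
def IsMQSym (m n : ℕ) (f : MvPolynomial ℕ ℤ) : Prop :=
  ∀ (k : ℕ) (a : Fin k → ℕ), (∀ l, 1 ≤ a l) →
    ∀ (i j : Fin k → ℕ), StrictMono i → StrictMono j →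
      (∀ l, i l < n) → (∀ l, j l < n) → (∀ l, i l % m = j l % m) →
      coeff (∑ l, Finsupp.single (i l) (a l)) f =
        coeff (∑ l, Finsupp.single (j l) (a l)) f

/-- `R_i^m` (1-based `i`): set `x_i = x_{i+1} = ⋯ = x_{i+m-1} = 0` and shift
all later variables down by `m`. -/
noncomputable def Rm (m i : ℕ) : MvPolynomial ℕ ℤ →ₐ[ℤ] MvPolynomial ℕ ℤ :=
  aeval (fun j => if j + 1 < i then X j else if j + 1 < i + m then 0 else X (j - m))

/-! `R_{p+1}^m` is `killCompl` of the increasing injection `shiftUp m p` that skips the block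
`[p, p + m)`, so the coefficient of `x^e` in `R_{p+1}^m f` is the coefficient in `f` of `e` with an
empty block inserted at `p`. Inserting empty blocks preserves order and residues mod `m`, so
`m`-quasisymmetry makes all `R_i^m f` equal (exponents reaching past `n - m` give coefficient zero
on both sides). Conversely, let `i`, `j` be increasing index sequences with the same residues and
`l₀` the first place with `j l₀ < i l₀`. Then `j l₀ ≤ i l₀ - m`, and `i l ≤ j l` before `l₀`, so the
block `[i l₀ - m, i l₀)` contains no index of `i`; deleting it and reinserting it at `[n - m, n)`
keeps the coefficient and lowers `i`, so a descent on the sum of the indices connects `i` to `j`.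
Every `R_i^m` being a ring homomorphism, the characterization gives closure under products. -/

namespace Finsupp

theorem exists_strictMono_sum_single_eq {α M : Type*} [LinearOrder α] [AddCommMonoid M]
    (e : α →₀ M) : ∃ (k : ℕ) (i : Fin k → α), StrictMono i ∧ (∀ l, i l ∈ e.support) ∧
      ∑ l, single (i l) (e (i l)) = e := by
  let σ := e.support.orderIsoOfFin rfl
  refine ⟨_, fun l => σ l, fun _ _ h => σ.strictMono h, fun l => (σ l).2, ?_⟩
  exact (σ.toEquiv.sum_comp fun x : e.support => single (x : α) (e x)).trans
    ((Finset.sum_coe_sort _ _).trans e.sum_single)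

theorem mapDomain_sum_single {α β ι M : Type*} [AddCommMonoid M] (g : α → β) (s : Finset ι)
    (i : ι → α) (a : ι → M) :
    mapDomain g (∑ l ∈ s, single (i l) (a l)) = ∑ l ∈ s, single (g (i l)) (a l) := by
  simp only [mapDomain_finsetSum, mapDomain_single]

end Finsupp

theorem InVars.mul {n : ℕ} {f g : MvPolynomial ℕ ℤ} (hf : InVars n f) (hg : InVars n g) :
    InVars n (f * g) := by
  classical
  intro d hd j hj
  obtain ⟨u, hu, v, hv, rfl⟩ := Finset.mem_add.mp (support_mul f g hd)
  rw [Finsupp.add_apply, hf u hu j hj, hg v hv j hj]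

def shiftUp (m p j : ℕ) : ℕ := if j < p then j else j + m

def shiftDown (m p j : ℕ) : ℕ := if j < p then j else j - m

theorem shiftUp_strictMono (m p : ℕ) : StrictMono (shiftUp m p) := by
  intro a b h
  unfold shiftUp
  split_ifs <;> omega

theorem shiftUp_injective (m p : ℕ) : Function.Injective (shiftUp m p) :=
  (shiftUp_strictMono m p).injective

theorem shiftUp_mod (m p j : ℕ) : shiftUp m p j % m = j % m := by
  unfold shiftUp
  split_ifs
  · rfl
  · exact Nat.add_mod_right j m

theorem shiftUp_lt_iff {m n p j : ℕ} (hp : p + m ≤ n) : shiftUp m p j < n ↔ j + m < n := by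
  unfold shiftUp
  split_ifs <;> omega

theorem shiftDown_le (m p j : ℕ) : shiftDown m p j ≤ j := by
  unfold shiftDown
  split_ifs <;> omega

theorem shiftUp_shiftDown {m p j : ℕ} (h : j < p ∨ p + m ≤ j) :
    shiftUp m p (shiftDown m p j) = j := by
  unfold shiftUp shiftDown
  split_ifs <;> omega

theorem Rm_succ_eq_killCompl (m p : ℕ) : Rm m (p + 1) = killCompl (shiftUp_injective m p) := by
  refine algHom_ext fun j => ?_
  rw [killCompl, aeval_X]
  by_cases hj : j ∈ Set.range (shiftUp m p)
  · obtain ⟨a, rfl⟩ := hj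
    rw [dif_pos ⟨a, rfl⟩, Equiv.ofInjective_symm_apply, Rm, aeval_X, shiftUp]
    split_ifs <;> first | rfl | omega | (congr 1; omega)
  · rw [dif_neg hj, Rm, aeval_X]
    have hblock : p ≤ j ∧ j < p + m := by
      by_contra h
      exact hj ⟨shiftDown m p j, shiftUp_shiftDown (by omega)⟩
    rw [if_neg (by omega), if_pos (by omega)]

theorem coeff_Rm_succ (m p : ℕ) (f : MvPolynomial ℕ ℤ) (e : ℕ →₀ ℕ) :
    coeff e (Rm m (p + 1) f) = coeff (e.mapDomain (shiftUp m p)) f := by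
  rw [Rm_succ_eq_killCompl, coeff_killCompl]

theorem coeff_mapDomain_shiftUp_eq_zero {m n p : ℕ} {f : MvPolynomial ℕ ℤ} (hf : InVars n f)
    (hp : p + m ≤ n) {e : ℕ →₀ ℕ} {j : ℕ} (hj : j ∈ e.support) (hjn : n ≤ j + m) :
    coeff (e.mapDomain (shiftUp m p)) f = 0 := by
  by_contra h
  have hvanish := hf _ (mem_support_iff.mpr h) (shiftUp m p j)
    (not_lt.mp (mt (shiftUp_lt_iff hp).mp (not_lt.mpr hjn)))
  rw [Finsupp.mapDomain_apply (shiftUp_injective m p)] at hvanish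
  exact Finsupp.mem_support_iff.mp hj hvanish

theorem Rm_succ_eq_of_isMQSym {m n p q : ℕ} {f : MvPolynomial ℕ ℤ} (hf : InVars n f)
    (hsym : IsMQSym m n f) (hp : p + m ≤ n) (hq : q + m ≤ n) :
    Rm m (p + 1) f = Rm m (q + 1) f := by
  ext e
  rw [coeff_Rm_succ, coeff_Rm_succ]
  by_cases hbig : ∃ j ∈ e.support, n ≤ j + m
  · obtain ⟨j, hj, hjn⟩ := hbig
    rw [coeff_mapDomain_shiftUp_eq_zero hf hp hj hjn,
      coeff_mapDomain_shiftUp_eq_zero hf hq hj hjn]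
  push Not at hbig
  obtain ⟨k, i, hi, hie, he⟩ := e.exists_strictMono_sum_single_eq
  rw [← he, Finsupp.mapDomain_sum_single, Finsupp.mapDomain_sum_single]
  exact hsym k _ (fun l => Nat.one_le_iff_ne_zero.mpr (Finsupp.mem_support_iff.mp (hie l)))
    _ _ ((shiftUp_strictMono m p).comp hi) ((shiftUp_strictMono m q).comp hi)
    (fun l => (shiftUp_lt_iff hp).mpr (hbig _ (hie l)))
    (fun l => (shiftUp_lt_iff hq).mpr (hbig _ (hie l)))
    (fun l => (shiftUp_mod m p (i l)).trans (shiftUp_mod m q (i l)).symm)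

theorem coeff_sum_single_shiftDown {m n p : ℕ} {f : MvPolynomial ℕ ℤ}
    (hR : Rm m (p + 1) f = Rm m (n - m + 1) f) (hp : p + m ≤ n) {k : ℕ} (a i : Fin k → ℕ)
    (hin : ∀ l, i l < n) (havoid : ∀ l, i l < p ∨ p + m ≤ i l) :
    coeff (∑ l, Finsupp.single (i l) (a l)) f =
      coeff (∑ l, Finsupp.single (shiftDown m p (i l)) (a l)) f := by
  have hlow : ∀ l, shiftUp m (n - m) (shiftDown m p (i l)) = shiftDown m p (i l) := by
    intro l
    have := hin l
    have := havoid l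
    unfold shiftUp shiftDown
    split_ifs <;> omega
  have hup : ∀ l, shiftUp m p (shiftDown m p (i l)) = i l := fun l => shiftUp_shiftDown (havoid l)
  calc coeff (∑ l, Finsupp.single (i l) (a l)) f
      = coeff (∑ l, Finsupp.single (shiftDown m p (i l)) (a l)) (Rm m (p + 1) f) := by
        rw [coeff_Rm_succ, Finsupp.mapDomain_sum_single]; simp only [hup]
    _ = coeff (∑ l, Finsupp.single (shiftDown m p (i l)) (a l)) f := by
        rw [hR, coeff_Rm_succ, Finsupp.mapDomain_sum_single]; simp only [hlow]

theorem exists_lower_of_Rm_eq {m n : ℕ} {f : MvPolynomial ℕ ℤ}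
    (hR : ∀ p, p + m ≤ n → Rm m (p + 1) f = Rm m (n - m + 1) f) {k : ℕ} (a i j : Fin k → ℕ)
    (hi : StrictMono i) (hj : StrictMono j) (hin : ∀ l, i l < n) (hres : ∀ l, i l % m = j l % m)
    (hlt : ∃ l, j l < i l) :
    ∃ ι : Fin k → ℕ, StrictMono ι ∧ (∀ l, ι l < n) ∧ (∀ l, ι l % m = j l % m) ∧
      ∑ l, ι l < ∑ l, i l ∧
      coeff (∑ l, Finsupp.single (i l) (a l)) f = coeff (∑ l, Finsupp.single (ι l) (a l)) f := by
  obtain ⟨l₀, (hl₀ : j l₀ < i l₀), hmin⟩ := wellFounded_lt.has_min {l | j l < i l} hlt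
  have hgap : j l₀ + m ≤ i l₀ := Nat.ModEq.add_le_of_lt (hres l₀).symm hl₀
  have hm : 0 < m := Nat.pos_of_ne_zero fun h => by
    have := hres l₀
    simp only [h, Nat.mod_zero] at this
    omega
  set p := i l₀ - m
  have havoid : ∀ l, i l < p ∨ p + m ≤ i l := by
    intro l
    rcases lt_or_ge l l₀ with h | h
    · have hle : i l ≤ j l := not_lt.mp fun hlt' => hmin l hlt' h
      have := hj h
      omega
    · have := hi.monotone h
      omega
  have hp : p + m ≤ n := by have := hin l₀; omega
  refine ⟨fun l => shiftDown m p (i l), fun a b hab => ?_, fun l => (shiftDown_le m p _).trans_lt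
    (hin l), fun l => ?_, Finset.sum_lt_sum (fun l _ => shiftDown_le m p _) ⟨l₀, ?_⟩,
    coeff_sum_single_shiftDown (hR p hp) hp a i hin havoid⟩
  · rw [← (shiftUp_strictMono m p).lt_iff_lt, shiftUp_shiftDown (havoid a),
      shiftUp_shiftDown (havoid b)]
    exact hi hab
  · rw [← shiftUp_mod m p, shiftUp_shiftDown (havoid l), hres l]
  · refine ⟨Finset.mem_univ _, ?_⟩
    unfold shiftDown
    split_ifs <;> omega

theorem isMQSym_of_Rm_eq {m n : ℕ} {f : MvPolynomial ℕ ℤ}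
    (hR : ∀ p, p + m ≤ n → Rm m (p + 1) f = Rm m (n - m + 1) f) : IsMQSym m n f := by
  intro k a _ i j hi hj hin hjn hres
  induction hN : ∑ l, i l + ∑ l, j l using Nat.strong_induction_on generalizing i j with
  | _ N ih =>
  by_cases hji : ∃ l, j l < i l
  · obtain ⟨ι, hι, hιn, hιres, hιsum, hcoeff⟩ :=
      exists_lower_of_Rm_eq hR a i j hi hj hin hres hji
    rw [hcoeff]
    exact ih _ (by omega) ι j hι hj hιn hjn hιres rfl
  by_cases hij : ∃ l, i l < j l
  · obtain ⟨ι, hι, hιn, hιres, hιsum, hcoeff⟩ :=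
      exists_lower_of_Rm_eq hR a j i hj hi hjn (fun l => (hres l).symm) hij
    rw [hcoeff]
    exact ih _ (by omega) i ι hi hι hin hιn (fun l => (hιres l).symm) rfl
  push Not at hji hij
  rw [funext fun l => le_antisymm (hij l) (hji l)]

theorem isMQSym_iff_Rm_eq {m n : ℕ} {f : MvPolynomial ℕ ℤ} (hf : InVars n f) :
    IsMQSym m n f ↔
      ∀ i j, 1 ≤ i → i + m ≤ n + 1 → 1 ≤ j → j + m ≤ n + 1 → Rm m i f = Rm m j f := by
  constructor
  · intro hsym i j hi hi' hj hj'
    obtain ⟨p, rfl⟩ : ∃ p, i = p + 1 := ⟨i - 1, by omega⟩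
    obtain ⟨q, rfl⟩ : ∃ q, j = q + 1 := ⟨j - 1, by omega⟩
    exact Rm_succ_eq_of_isMQSym hf hsym (by omega) (by omega)
  · intro hR
    exact isMQSym_of_Rm_eq fun p hp => hR _ _ (by omega) (by omega) (by omega) (by omega)

theorem mqsym_ring_and_characterization_general (m n : ℕ) :
    (∀ f g : MvPolynomial ℕ ℤ, InVars n f → InVars n g →
      IsMQSym m n f → IsMQSym m n g → IsMQSym m n (f * g)) ∧
    (∀ f : MvPolynomial ℕ ℤ, InVars n f →
      (IsMQSym m n f ↔
        ∀ i j, 1 ≤ i → i + m ≤ n + 1 → 1 ≤ j → j + m ≤ n + 1 →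
          Rm m i f = Rm m j f)) := by
  refine ⟨fun f g hf hg hsf hsg => ?_, fun f hf => isMQSym_iff_Rm_eq hf⟩
  rw [isMQSym_iff_Rm_eq (hf.mul hg)]
  intro i j hi hi' hj hj'
  rw [map_mul, map_mul, (isMQSym_iff_Rm_eq hf).mp hsf i j hi hi' hj hj',
    (isMQSym_iff_Rm_eq hg).mp hsg i j hi hi' hj hj']

/-- `QSym^(m)_n` is closed under multiplication; more
precisely, `f ∈ ℤ[x_1,…,x_n]` is `m`-quasisymmetric iff
`R_1^m f = R_2^m f = ⋯ = R_{n-m+1}^m f`. -/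
theorem mqsym_ring_and_characterization (m n : ℕ) (hm : 1 ≤ m) (hmn : m ≤ n) :
    (∀ f g : MvPolynomial ℕ ℤ, InVars n f → InVars n g →
      IsMQSym m n f → IsMQSym m n g → IsMQSym m n (f * g)) ∧
    (∀ f : MvPolynomial ℕ ℤ, InVars n f →
      (IsMQSym m n f ↔
        ∀ i j, 1 ≤ i → i + m ≤ n + 1 → 1 ≤ j → j + m ≤ n + 1 →
          Rm m i f = Rm m j f)) :=
  mqsym_ring_and_characterization_general m n
end
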